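/- For a standard Gaussian vector z ~ N(0, I_d) and an L-smooth stochastic function F(·) = f(·;ξ), the second moment of the forward-difference zeroth-order estimator satisfies (1/μ²) E_z[(F(x + μz) - F(x))² ‖z‖²] ≤ (μ²/2) L² (d+6)³ + 2(d+4)‖∇F(x)‖². -/

import Mathlib

open MeasureTheory ProbabilityTheory

/-- The standard Gaussian measure `N(0, I_d)` on `ℝ^d`. -/
noncomputable def stdGaussian (d : ℕ) : Measure (EuclideanSpace ℝ (Fin d)) :=
  (Measure.pi fun _ : Fin d => gaussianReal 0 1).map
    (MeasurableEquiv.toLp 2 (Fin d → ℝ))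

open Real

section aux


lemma gaussianPDFReal_std (x : ℝ) :
    gaussianPDFReal 0 1 x = (Real.sqrt (2*π))⁻¹ * Real.exp (-x^2/2) := by
  simp [gaussianPDFReal]

lemma stdgauss_eq : gaussianReal 0 1
    = volume.withDensity fun x => ((gaussianPDFReal 0 1 x).toNNReal : ENNReal) := by
  rw [gaussianReal_of_var_ne_zero _ one_ne_zero]
  rfl

lemma measurable_toNN : Measurable fun x => (gaussianPDFReal 0 1 x).toNNReal :=
  (measurable_gaussianPDFReal 0 1).real_toNNReal

lemma integrable_pow_mul_gauss (k : ℕ) :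
    Integrable (fun x : ℝ => x ^ k * Real.exp (-x^2/2)) := by
  have h := integrable_rpow_mul_exp_neg_mul_sq (b := (1/2 : ℝ)) (by norm_num)
    (s := (k : ℝ)) (lt_of_lt_of_le (by norm_num) (Nat.cast_nonneg k))
  simp only [Real.rpow_natCast] at h
  refine h.congr (Filter.Eventually.of_forall fun x => ?_)
  ring_nf

lemma integrable_gauss_iff {f : ℝ → ℝ} (hf : Measurable f) :
    Integrable f (gaussianReal 0 1) ↔ Integrable (fun x => f x * Real.exp (-x^2/2)) := by
  rw [stdgauss_eq, integrable_withDensity_iff measurable_toNN.coe_nnreal_ennreal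
    (Filter.Eventually.of_forall fun x => ENNReal.coe_lt_top)]
  have : (fun x => f x * (((gaussianPDFReal 0 1 x).toNNReal : ENNReal)).toReal) =
      (Real.sqrt (2*π))⁻¹ • fun x => (f x * Real.exp (-x^2/2)) := by
    funext x
    simp only [Pi.smul_apply]
    simp only [ENNReal.coe_toReal]
    rw [Real.coe_toNNReal _ (gaussianPDFReal_nonneg _ _ _), gaussianPDFReal_std]
    simp [smul_eq_mul]; ring
  rw [this, integrable_smul_iff (by positivity : ((Real.sqrt (2*π))⁻¹ : ℝ) ≠ 0)]

lemma integral_gauss_eq (f : ℝ → ℝ) :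
    ∫ x, f x ∂(gaussianReal 0 1) = (Real.sqrt (2*π))⁻¹ * ∫ x, f x * Real.exp (-x^2/2) := by
  rw [stdgauss_eq, integral_withDensity_eq_integral_smul measurable_toNN f]
  rw [← smul_eq_mul, ← integral_smul]
  congr 1; funext x
  rw [NNReal.smul_def, Real.coe_toNNReal _ (gaussianPDFReal_nonneg _ _ _), gaussianPDFReal_std]
  simp [smul_eq_mul]; ring

lemma integrable_pow_gauss (k : ℕ) :
    Integrable (fun x : ℝ => x ^ k) (gaussianReal 0 1) :=
  (integrable_gauss_iff (by fun_prop)).2 (integrable_pow_mul_gauss k)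

-- assume s1 lemmas exist; re-axiomatize quickly for split testing
lemma I_even (n : ℕ) : ∫ x : ℝ, x^(2*n) * Real.exp (-x^2/2)
    = 2^n * Real.sqrt 2 * Real.Gamma ((2*n+1)/2) := by
  have hint := integrable_pow_mul_gauss (2*n)
  have hIoi : ∫ x in Set.Ioi (0:ℝ), x^(2*n) * Real.exp (-x^2/2)
      = (1/2:ℝ) ^ (-(2*(n:ℝ)+1)/2) * (1/2) * Real.Gamma ((2*n+1)/2) := by
    have h := integral_rpow_mul_exp_neg_mul_rpow (p := 2) (q := 2*(n:ℝ)) (b := 1/2)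
      (by norm_num) (lt_of_lt_of_le (by norm_num : (-1:ℝ) < 0) (by positivity : (0:ℝ) ≤ 2*(n:ℝ))) (by norm_num)
    push_cast at h ⊢
    rw [← h]
    refine setIntegral_congr_fun measurableSet_Ioi (fun x hx => ?_)
    rw [show (2*(n:ℝ)) = ((2*n : ℕ):ℝ) by push_cast; ring, Real.rpow_natCast,
      show ((2:ℝ)) = ((2:ℕ):ℝ) by norm_num, Real.rpow_natCast]
    congr 1
    push_cast
    ring
  have hIic : ∫ x in Set.Iic (0:ℝ), x^(2*n) * Real.exp (-x^2/2)
      = ∫ x in Set.Ioi (0:ℝ), x^(2*n) * Real.exp (-x^2/2) := by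
    have h0 := integral_comp_neg_Ioi (c := 0) (f := fun x => x^(2*n) * Real.exp (-x^2/2))
    simp only [neg_zero] at h0
    rw [← h0]
    refine setIntegral_congr_fun measurableSet_Ioi (fun x hx => ?_)
    simp [mul_pow, neg_pow, pow_mul]
  rw [← intervalIntegral.integral_Iic_add_Ioi (hint.integrableOn) (hint.integrableOn), hIic, hIoi]
  rw [show (-(2*(n:ℝ)+1)/2) = -((2*(n:ℝ)+1)/2) by ring]
  rw [Real.rpow_neg (by norm_num), ← Real.inv_rpow (by norm_num)]
  norm_num
  rw [show ((2*(n:ℝ)+1)/2) = (n:ℝ) + (1/2 : ℝ) by ring, Real.rpow_add (by norm_num),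
    Real.rpow_natCast, ← Real.sqrt_eq_rpow]
  push_cast
  ring
lemma gauss_moment_even (n : ℕ) : ∫ x, x^(2*n) ∂(gaussianReal 0 1)
    = 2^n * Real.Gamma ((2*n+1)/2) / Real.sqrt π := by
  rw [integral_gauss_eq, I_even, Real.sqrt_mul (by norm_num)]
  have h2 : Real.sqrt 2 ≠ 0 := by positivity
  have hp : Real.sqrt π ≠ 0 := by positivity
  field_simp

lemma gauss_moment_odd {k : ℕ} (hk : Odd k) : ∫ x, x^k ∂(gaussianReal 0 1) = 0 := by
  have hmap : (gaussianReal 0 1).map (fun x => -x) = gaussianReal 0 1 := by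
    have := gaussianReal_map_const_mul (μ := 0) (v := 1) (-1)
    simp only [neg_one_mul] at this
    rw [this]
    norm_num
  have : ∫ x, x^k ∂(gaussianReal 0 1) = ∫ x, (-x)^k ∂(gaussianReal 0 1) := by
    conv_lhs => rw [← hmap]
    rw [integral_map (by fun_prop) (by fun_prop)]
  simp only [hk.neg_pow] at this
  simp only [integral_neg] at this
  linarith

lemma Gamma_three_half : Real.Gamma (3/2) = Real.sqrt π / 2 := by
  have := Real.Gamma_add_one (s := 1/2) (by norm_num)
  norm_num at this
  rw [show (3/2 : ℝ) = 1/2 + 1 by ring, Real.Gamma_add_one (by norm_num), Real.Gamma_one_half_eq]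
  ring

lemma Gamma_five_half : Real.Gamma (5/2) = 3 * Real.sqrt π / 4 := by
  rw [show (5/2 : ℝ) = 3/2 + 1 by ring, Real.Gamma_add_one (by norm_num), Gamma_three_half]
  ring

lemma Gamma_seven_half : Real.Gamma (7/2) = 15 * Real.sqrt π / 8 := by
  rw [show (7/2 : ℝ) = 5/2 + 1 by ring, Real.Gamma_add_one (by norm_num), Gamma_five_half]
  ring

lemma sqrt_pi_ne : Real.sqrt π ≠ 0 := by positivity

lemma gaussM0 : ∫ x, x^(0:ℕ) ∂(gaussianReal 0 1) = 1 := by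
  have := gauss_moment_even 0
  norm_num [Real.Gamma_one_half_eq] at this
  simpa using this

lemma gaussM2 : ∫ x, x^(2:ℕ) ∂(gaussianReal 0 1) = 1 := by
  have := gauss_moment_even 1
  norm_num [Gamma_three_half] at this
  rw [this]
  field_simp

lemma gaussM4 : ∫ x, x^(4:ℕ) ∂(gaussianReal 0 1) = 3 := by
  have := gauss_moment_even 2
  norm_num [Gamma_five_half] at this
  rw [this]
  field_simp

lemma gaussM6 : ∫ x, x^(6:ℕ) ∂(gaussianReal 0 1) = 15 := by
  have := gauss_moment_even 3
  norm_num [Gamma_seven_half] at this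
  rw [this]
  field_simp



lemma integral_monomial (d : ℕ) (a : Fin d → ℕ) :
    ∫ y : Fin d → ℝ, ∏ l, (y l)^(a l) ∂(Measure.pi fun _ : Fin d => gaussianReal 0 1)
      = ∏ l, ∫ x, x ^ (a l) ∂(gaussianReal 0 1) := by
  letI : MeasureSpace ℝ := ⟨gaussianReal 0 1⟩
  haveI : SigmaFinite (volume : Measure ℝ) :=
    (inferInstance : SigmaFinite (gaussianReal 0 1))
  exact MeasureTheory.integral_fin_nat_prod_eq_prod (fun l (x : ℝ) => x ^ (a l))

lemma integrable_monomial (d : ℕ) (a : Fin d → ℕ) :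
    Integrable (fun y : Fin d → ℝ => ∏ l, (y l)^(a l))
      (Measure.pi fun _ : Fin d => gaussianReal 0 1) := by
  letI : MeasureSpace ℝ := ⟨gaussianReal 0 1⟩
  haveI : SigmaFinite (volume : Measure ℝ) :=
    (inferInstance : SigmaFinite (gaussianReal 0 1))
  exact MeasureTheory.Integrable.fin_nat_prod (fun l => integrable_pow_gauss (a l))

-- std ↔ pi transfer
lemma integral_std_eq (d : ℕ) (f : EuclideanSpace ℝ (Fin d) → ℝ) :
    ∫ z, f z ∂(stdGaussian d)
      = ∫ y : Fin d → ℝ, f ((MeasurableEquiv.toLp 2 (Fin d → ℝ)) y)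
          ∂(Measure.pi fun _ : Fin d => gaussianReal 0 1) := by
  rw [_root_.stdGaussian, integral_map_equiv]

lemma integrable_std_iff (d : ℕ) (f : EuclideanSpace ℝ (Fin d) → ℝ) :
    Integrable f (stdGaussian d)
      ↔ Integrable (fun y : Fin d → ℝ => f ((MeasurableEquiv.toLp 2 (Fin d → ℝ)) y))
          (Measure.pi fun _ : Fin d => gaussianReal 0 1) := by
  rw [_root_.stdGaussian, integrable_map_equiv]
  rfl

lemma euclid_coord (d : ℕ) (y : Fin d → ℝ) (i : Fin d) :
    ((MeasurableEquiv.toLp 2 (Fin d → ℝ)) y) i = y i := rfl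

lemma euclid_norm_sq (d : ℕ) (v : EuclideanSpace ℝ (Fin d)) :
    ‖v‖^2 = ∑ i, (v i)^2 := by
  rw [EuclideanSpace.norm_eq, Real.sq_sqrt (by positivity)]
  simp [sq_abs]

lemma euclid_inner (d : ℕ) (g v : EuclideanSpace ℝ (Fin d)) :
    (inner ℝ g v : ℝ) = ∑ i, g i * v i := by
  simp [PiLp.inner_apply, RCLike.inner_apply, mul_comm]


lemma prod_single {d : ℕ} (i : Fin d) (c : Fin d → ℝ) (u : ℝ)
    (h : ∀ l, c l = if i = l then u else 1) : ∏ l, c l = u := by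
  rw [Finset.prod_congr rfl (fun l _ => h l)]
  simp

lemma rep1 {d : ℕ} (i k j : Fin d) (y : Fin d → ℝ) :
    y i * y k * (y j)^2
      = ∏ l, (y l) ^ ((if i = l then 1 else 0) + (if k = l then 1 else 0)
          + (if j = l then 2 else 0)) := by
  simp only [pow_add, Finset.prod_mul_distrib, pow_ite, pow_one, pow_zero,
    Finset.prod_ite_eq, Finset.mem_univ, if_true]

lemma rep2 {d : ℕ} (i j k : Fin d) (y : Fin d → ℝ) :
    (y i)^2 * (y j)^2 * (y k)^2
      = ∏ l, (y l) ^ ((if i = l then 2 else 0) + (if j = l then 2 else 0)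
          + (if k = l then 2 else 0)) := by
  simp only [pow_add, Finset.prod_mul_distrib, pow_ite, pow_zero,
    Finset.prod_ite_eq, Finset.mem_univ, if_true]

lemma T1 {d : ℕ} (i k j : Fin d) :
    ∫ y : Fin d → ℝ, y i * y k * (y j)^2 ∂(Measure.pi fun _ : Fin d => gaussianReal 0 1)
      = if i = k then (if i = j then 3 else 1) else 0 := by
  rw [show (fun y : Fin d → ℝ => y i * y k * (y j)^2) = fun y => ∏ l, (y l) ^
      ((if i = l then 1 else 0) + (if k = l then 1 else 0) + (if j = l then 2 else 0))
    from funext (rep1 i k j), integral_monomial]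
  by_cases hik : i = k
  · subst hik
    by_cases hij : i = j
    · subst hij
      rw [if_pos rfl, if_pos rfl]
      refine prod_single i _ 3 (fun l => ?_)
      by_cases hl : i = l
      · subst hl; simp [gaussM4]
      · simp [hl, gaussM0]
    · rw [if_pos rfl, if_neg hij]
      refine Finset.prod_eq_one (fun l _ => ?_)
      by_cases hl : i = l
      · subst hl; simp [Ne.symm hij, gaussM2]
      · by_cases hl2 : j = l
        · subst hl2; simp [hl, gaussM2]
        · simp [hl, hl2, gaussM0]
  · rw [if_neg hik]
    refine Finset.prod_eq_zero (Finset.mem_univ i) ?_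
    rw [if_pos rfl, if_neg (fun h => hik h.symm)]
    exact gauss_moment_odd (by by_cases hji : j = i <;> simp [hji] <;> decide)

lemma T2 {d : ℕ} (i j k : Fin d) :
    ∫ y : Fin d → ℝ, (y i)^2 * (y j)^2 * (y k)^2
        ∂(Measure.pi fun _ : Fin d => gaussianReal 0 1)
      = 1 + (if i = j then 2 else 0) + (if j = k then 2 else 0) + (if i = k then 2 else 0)
          + (if i = j ∧ j = k then 8 else 0) := by
  rw [show (fun y : Fin d → ℝ => (y i)^2 * (y j)^2 * (y k)^2) = fun y => ∏ l, (y l) ^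
      ((if i = l then 2 else 0) + (if j = l then 2 else 0) + (if k = l then 2 else 0))
    from funext (rep2 i j k), integral_monomial]
  by_cases hij : i = j <;> by_cases hjk : j = k <;> by_cases hik : i = k
  · subst hij; subst hjk
    rw [prod_single i _ 15 (fun l => ?_)]
    · norm_num
    by_cases hl : i = l
    · subst hl; simp [gaussM6]
    · simp [hl, gaussM0]
  · exact absurd (hij.trans hjk) hik
  · exact absurd (hij.symm.trans hik) hjk
  · subst hij
    rw [prod_single i _ 3 (fun l => ?_)]
    · norm_num [hjk, hik]
    by_cases hl : i = l
    · subst hl; simp [Ne.symm hjk, gaussM4]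
    · by_cases hl2 : k = l
      · subst hl2; simp [hl, gaussM2]
      · simp [hl, hl2, gaussM0]
  · exact absurd (hik.trans hjk.symm) hij
  · subst hjk
    rw [prod_single j _ 3 (fun l => ?_)]
    · norm_num [hij, hik]
    by_cases hl : j = l
    · subst hl; simp [hij, gaussM4]
    · by_cases hl2 : i = l
      · subst hl2; simp [hl, gaussM2]
      · simp [hl, hl2, gaussM0]
  · subst hik
    rw [prod_single i _ 3 (fun l => ?_)]
    · norm_num [hij, hjk]
    by_cases hl : i = l
    · subst hl; simp [Ne.symm hij, gaussM4]
    · by_cases hl2 : j = l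
      · subst hl2; simp [hl, Ne.symm hjk, gaussM2]
      · simp [hl, hl2, gaussM0]
  · rw [Finset.prod_eq_one (fun l _ => ?_)]
    · norm_num [hij, hjk, hik]
    by_cases h1 : i = l
    · subst h1; simp [Ne.symm hij, Ne.symm hik, gaussM2]
    · by_cases h2 : j = l
      · subst h2; simp [h1, Ne.symm hjk, gaussM2]
      · by_cases h3 : k = l
        · subst h3; simp [h1, h2, gaussM2]
        · simp [h1, h2, h3, gaussM0]


lemma integrable_term1 {d : ℕ} (i k j : Fin d) :
    Integrable (fun y : Fin d → ℝ => y i * y k * (y j)^2)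
      (Measure.pi fun _ : Fin d => gaussianReal 0 1) := by
  rw [show (fun y : Fin d → ℝ => y i * y k * (y j)^2) = fun y => ∏ l, (y l) ^
      ((if i = l then 1 else 0) + (if k = l then 1 else 0) + (if j = l then 2 else 0))
    from funext (rep1 i k j)]
  exact integrable_monomial d _

lemma integrable_term2 {d : ℕ} (i j k : Fin d) :
    Integrable (fun y : Fin d → ℝ => (y i)^2 * (y j)^2 * (y k)^2)
      (Measure.pi fun _ : Fin d => gaussianReal 0 1) := by
  rw [show (fun y : Fin d → ℝ => (y i)^2 * (y j)^2 * (y k)^2) = fun y => ∏ l, (y l) ^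
      ((if i = l then 2 else 0) + (if j = l then 2 else 0) + (if k = l then 2 else 0))
    from funext (rep2 i j k)]
  exact integrable_monomial d _

lemma expand1 {d : ℕ} (g : Fin d → ℝ) (y : Fin d → ℝ) :
    (∑ i, g i * y i)^2 * (∑ j, (y j)^2)
      = ∑ i, ∑ k, ∑ j, g i * g k * (y i * y k * (y j)^2) := by
  rw [sq, Finset.sum_mul_sum, Finset.sum_mul]
  refine Finset.sum_congr rfl fun i _ => ?_
  rw [Finset.sum_mul]
  refine Finset.sum_congr rfl fun k _ => ?_
  rw [Finset.mul_sum]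
  exact Finset.sum_congr rfl fun j _ => by ring

lemma expand2 {d : ℕ} (y : Fin d → ℝ) :
    (∑ j, (y j)^2)^3 = ∑ i, ∑ j, ∑ k, (y i)^2 * (y j)^2 * (y k)^2 := by
  rw [pow_succ, sq, Finset.sum_mul_sum, Finset.sum_mul]
  refine Finset.sum_congr rfl fun i _ => ?_
  rw [Finset.sum_mul]
  refine Finset.sum_congr rfl fun j _ => ?_
  rw [Finset.mul_sum]

lemma integrable_J1fun {d : ℕ} (g : Fin d → ℝ) :
    Integrable (fun y : Fin d → ℝ => (∑ i, g i * y i)^2 * (∑ j, (y j)^2))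
      (Measure.pi fun _ : Fin d => gaussianReal 0 1) := by
  rw [show (fun y : Fin d → ℝ => (∑ i, g i * y i)^2 * (∑ j, (y j)^2))
      = fun y => ∑ i, ∑ k, ∑ j, g i * g k * (y i * y k * (y j)^2) from funext (expand1 g)]
  exact integrable_finset_sum _ fun i _ => integrable_finset_sum _ fun k _ =>
    integrable_finset_sum _ fun j _ => (integrable_term1 i k j).const_mul _

lemma integrable_J2fun {d : ℕ} :
    Integrable (fun y : Fin d → ℝ => (∑ j, (y j)^2)^3)
      (Measure.pi fun _ : Fin d => gaussianReal 0 1) := by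
  rw [show (fun y : Fin d → ℝ => (∑ j, (y j)^2)^3)
      = fun y => ∑ i, ∑ j, ∑ k, (y i)^2 * (y j)^2 * (y k)^2 from funext expand2]
  exact integrable_finset_sum _ fun i _ => integrable_finset_sum _ fun j _ =>
    integrable_finset_sum _ fun k _ => integrable_term2 i j k

lemma J1 {d : ℕ} (g : Fin d → ℝ) :
    ∫ y : Fin d → ℝ, (∑ i, g i * y i)^2 * (∑ j, (y j)^2)
        ∂(Measure.pi fun _ : Fin d => gaussianReal 0 1)
      = ((d:ℝ) + 2) * ∑ i, (g i)^2 := by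
  rw [show (fun y : Fin d → ℝ => (∑ i, g i * y i)^2 * (∑ j, (y j)^2))
      = fun y => ∑ i, ∑ k, ∑ j, g i * g k * (y i * y k * (y j)^2) from funext (expand1 g)]
  rw [integral_finset_sum _ fun i _ => integrable_finset_sum _ fun k _ =>
    integrable_finset_sum _ fun j _ => (integrable_term1 i k j).const_mul _]
  have step : ∀ i : Fin d, (∫ y : Fin d → ℝ, ∑ k, ∑ j, g i * g k * (y i * y k * (y j)^2)
      ∂(Measure.pi fun _ : Fin d => gaussianReal 0 1)) = g i * g i * ((d:ℝ) + 2) := by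
    intro i
    rw [integral_finset_sum _ fun k _ =>
      integrable_finset_sum _ fun j _ => (integrable_term1 i k j).const_mul _]
    have stepk : ∀ k : Fin d, (∫ y : Fin d → ℝ, ∑ j, g i * g k * (y i * y k * (y j)^2)
        ∂(Measure.pi fun _ : Fin d => gaussianReal 0 1))
        = if i = k then g i * g k * ((d:ℝ) + 2) else 0 := by
      intro k
      rw [integral_finset_sum _ fun j _ => (integrable_term1 i k j).const_mul _]
      have : ∀ j : Fin d, (∫ y : Fin d → ℝ, g i * g k * (y i * y k * (y j)^2)
          ∂(Measure.pi fun _ : Fin d => gaussianReal 0 1))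
          = g i * g k * (if i = k then (if i = j then 3 else 1) else 0) := by
        intro j
        rw [integral_const_mul, T1]
      rw [Finset.sum_congr rfl fun j _ => this j]
      by_cases hik : i = k
      · subst hik
        simp only [eq_self_iff_true, if_true, ← Finset.mul_sum]
        congr 1
        have : ∀ j : Fin d, (if i = j then (3:ℝ) else 1) = 1 + (if i = j then 2 else 0) := by
          intro j; by_cases h : i = j <;> simp [h] <;> norm_num
        rw [Finset.sum_congr rfl fun j _ => this j, Finset.sum_add_distrib]
        simp [Finset.sum_ite_eq, Finset.card_univ]
      · simp [hik]
    rw [Finset.sum_congr rfl fun k _ => stepk k]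
    simp [Finset.sum_ite_eq, Finset.card_univ]
  rw [Finset.sum_congr rfl fun i _ => step i, Finset.mul_sum]
  exact Finset.sum_congr rfl fun i _ => by ring

lemma J2 {d : ℕ} :
    ∫ y : Fin d → ℝ, (∑ j, (y j)^2)^3 ∂(Measure.pi fun _ : Fin d => gaussianReal 0 1)
      = (d:ℝ)^3 + 6*(d:ℝ)^2 + 8*(d:ℝ) := by
  rw [show (fun y : Fin d → ℝ => (∑ j, (y j)^2)^3)
      = fun y => ∑ i, ∑ j, ∑ k, (y i)^2 * (y j)^2 * (y k)^2 from funext expand2]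
  rw [integral_finset_sum _ fun i _ => integrable_finset_sum _ fun j _ =>
    integrable_finset_sum _ fun k _ => integrable_term2 i j k]
  have step : ∀ i : Fin d, (∫ y : Fin d → ℝ, ∑ j, ∑ k, (y i)^2 * (y j)^2 * (y k)^2
      ∂(Measure.pi fun _ : Fin d => gaussianReal 0 1)) = (d:ℝ)^2 + 6*(d:ℝ) + 8 := by
    intro i
    rw [integral_finset_sum _ fun j _ => integrable_finset_sum _ fun k _ => integrable_term2 i j k]
    have stepj : ∀ j : Fin d, (∫ y : Fin d → ℝ, ∑ k, (y i)^2 * (y j)^2 * (y k)^2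
        ∂(Measure.pi fun _ : Fin d => gaussianReal 0 1))
        = ((d:ℝ) + 4) + (d:ℝ) * (if i = j then 2 else 0) + (if i = j then 8 else 0) := by
      intro j
      rw [integral_finset_sum _ fun k _ => integrable_term2 i j k]
      rw [Finset.sum_congr rfl fun k _ => T2 i j k]
      by_cases hij : i = j
      · subst hij
        simp [Finset.sum_add_distrib, Finset.sum_ite_eq, Finset.card_univ]
        ring
      · simp [hij, Finset.sum_add_distrib, Finset.sum_ite_eq, Finset.card_univ]
        ring
    rw [Finset.sum_congr rfl fun j _ => stepj j]
    simp [Finset.sum_add_distrib, Finset.sum_ite_eq, Finset.card_univ, Finset.mul_sum]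
    ring
  rw [Finset.sum_congr rfl fun i _ => step i]
  simp [Finset.card_univ]
  ring


variable {d : ℕ}

local notation "⟪" x ", " y "⟫" => @inner ℝ _ _ x y

lemma taylor_bound (L : ℝ) (hL : 0 ≤ L) (F : EuclideanSpace ℝ (Fin d) → ℝ)
    (hdiff : Differentiable ℝ F)
    (hlip : ∀ x y, ‖gradient F x - gradient F y‖ ≤ L * ‖x - y‖)
    (x v : EuclideanSpace ℝ (Fin d)) :
    |F (x + v) - F x - ⟪gradient F x, v⟫| ≤ L/2 * ‖v‖^2 := by
  have hcont : Continuous (gradient F) := by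
    refine (LipschitzWith.of_dist_le_mul (K := Real.toNNReal L) (fun a b => ?_)).continuous
    rw [dist_eq_norm, dist_eq_norm, Real.coe_toNNReal _ hL]
    exact hlip a b
  have hd : ∀ t : ℝ, HasDerivAt (fun s : ℝ => F (x + s • v))
      ⟪gradient F (x + t • v), v⟫ t := by
    intro t
    have h1 : HasDerivAt (fun s : ℝ => x + s • v) v t := by
      simpa using ((hasDerivAt_id t).smul_const v).const_add x
    have h2 := (hdiff (x + t • v)).hasGradientAt.hasFDerivAt
    have h3 := h2.comp_hasDerivAt t h1
    convert h3 using 1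
    all_goals rfl
  have hicont : Continuous fun t : ℝ => ⟪gradient F (x + t • v), v⟫ := by
    exact (hcont.comp (by continuity)).inner continuous_const
  have key : F (x + v) - F x = ∫ t in (0:ℝ)..1, ⟪gradient F (x + t • v), v⟫ := by
    have h := intervalIntegral.integral_eq_sub_of_hasDerivAt (f := fun s : ℝ => F (x + s • v))
      (fun t _ => hd t) (hicont.intervalIntegrable 0 1)
    simp only [one_smul, zero_smul, add_zero] at h
    exact h.symm
  have hconst : (⟪gradient F x, v⟫ : ℝ) = ∫ t in (0:ℝ)..1, ⟪gradient F x, v⟫ := by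
    simp
  have hsub : F (x + v) - F x - ⟪gradient F x, v⟫
      = ∫ t in (0:ℝ)..1, ⟪gradient F (x + t • v) - gradient F x, v⟫ := by
    rw [key, hconst, ← intervalIntegral.integral_sub (hicont.intervalIntegrable 0 1)
      (intervalIntegrable_const)]
    simp [inner_sub_left]
  rw [hsub]
  have hbd : ∀ᵐ t ∂(volume.restrict (Set.uIoc (0:ℝ) 1)),
      ‖(⟪gradient F (x + t • v) - gradient F x, v⟫ : ℝ)‖ ≤ L * ‖v‖^2 * t := by
    refine (ae_restrict_iff' measurableSet_uIoc).2 (Filter.Eventually.of_forall fun t ht => ?_)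
    rw [Set.uIoc_of_le (by norm_num : (0:ℝ) ≤ 1)] at ht
    calc ‖(⟪gradient F (x + t • v) - gradient F x, v⟫ : ℝ)‖
        ≤ ‖gradient F (x + t • v) - gradient F x‖ * ‖v‖ := norm_inner_le_norm _ _
      _ ≤ (L * ‖t • v‖) * ‖v‖ := by
          refine mul_le_mul_of_nonneg_right ?_ (norm_nonneg v)
          simpa using hlip (x + t • v) x
      _ = L * ‖v‖^2 * |t| := by rw [norm_smul]; simp [Real.norm_eq_abs]; ring
      _ = L * ‖v‖^2 * t := by rw [abs_of_pos ht.1]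
  have := intervalIntegral.norm_integral_le_abs_of_norm_le hbd
    ((continuous_const.mul continuous_id).intervalIntegrable 0 1)
  rw [Real.norm_eq_abs] at this
  refine le_trans this ?_
  rw [show (fun t : ℝ => L * ‖v‖^2 * t) = fun t : ℝ => L * ‖v‖^2 * t from rfl]
  rw [intervalIntegral.integral_const_mul, integral_id]
  rw [abs_of_nonneg (by positivity)]
  norm_num
  nlinarith [sq_nonneg ‖v‖]

end aux

/-- Second moment of the forward-difference zeroth-order estimator:
`(1/μ²) E_z[(F(x+μz) - F(x))² ‖z‖²] ≤ (μ²/2) L² (d+6)³ + 2(d+4)‖∇F(x)‖²`. -/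
theorem zo_gradient_second_moment_bound
    (d : ℕ) (L μ : ℝ) (hL : 0 ≤ L) (hμ : 0 < μ)
    (F : EuclideanSpace ℝ (Fin d) → ℝ)
    (hdiff : Differentiable ℝ F)
    (hlip : ∀ x y, ‖gradient F x - gradient F y‖ ≤ L * ‖x - y‖)
    (x : EuclideanSpace ℝ (Fin d)) :
    (1/μ^2) * ∫ z, (F (x + μ • z) - F x)^2 * ‖z‖^2 ∂(stdGaussian d)
      ≤ μ^2/2 * L^2 * ((d:ℝ) + 6)^3 + 2 * ((d:ℝ) + 4) * ‖gradient F x‖^2 := by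
  have hμ2 : (0:ℝ) < μ^2 := by positivity
  set g := gradient F x with hg
  -- pointwise bound
  have hpt : ∀ z : EuclideanSpace ℝ (Fin d),
      (F (x + μ • z) - F x)^2 * ‖z‖^2
        ≤ 2*μ^2*((inner ℝ g z : ℝ)^2*‖z‖^2) + L^2*μ^4/2*(‖z‖^2)^3 := by
    intro z
    have ht := taylor_bound L hL F hdiff hlip x (μ • z)
    rw [← hg] at ht
    have hi : (inner ℝ g (μ • z) : ℝ) = μ * (inner ℝ g z : ℝ) := real_inner_smul_right g z μ
    have hn : ‖μ • z‖^2 = μ^2 * ‖z‖^2 := by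
      rw [norm_smul, mul_pow, Real.norm_eq_abs, sq_abs]
    rw [hi, hn] at ht
    have h1 := abs_le.1 ht
    have hsq : (F (x + μ • z) - F x)^2
        ≤ 2*μ^2*(inner ℝ g z : ℝ)^2 + L^2*μ^4/2*(‖z‖^2)^2 := by
      have hr2 : (F (x + μ • z) - F x - μ * (inner ℝ g z : ℝ))^2
          ≤ (L/2*(μ^2*‖z‖^2))^2 := by
        nlinarith [mul_nonneg (sub_nonneg.2 h1.2)
          (by linarith [h1.1] : (0:ℝ) ≤ F (x + μ • z) - F x - μ * (inner ℝ g z : ℝ)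
            + L / 2 * (μ ^ 2 * ‖z‖ ^ 2))]
      nlinarith [hr2, sq_nonneg (F (x + μ • z) - F x - 2*μ*(inner ℝ g z : ℝ))]
    calc (F (x + μ • z) - F x)^2 * ‖z‖^2
        ≤ (2*μ^2*(inner ℝ g z : ℝ)^2 + L^2*μ^4/2*(‖z‖^2)^2) * ‖z‖^2 :=
          mul_le_mul_of_nonneg_right hsq (sq_nonneg _)
      _ = 2*μ^2*((inner ℝ g z : ℝ)^2*‖z‖^2) + L^2*μ^4/2*(‖z‖^2)^3 := by ring
  -- integrability of the dominating function
  have hfun1 : (fun y : Fin d → ℝ =>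
      ((inner ℝ g ((MeasurableEquiv.toLp 2 (Fin d → ℝ)) y) : ℝ))^2
        * ‖(MeasurableEquiv.toLp 2 (Fin d → ℝ)) y‖^2)
      = fun y : Fin d → ℝ => (∑ i, g i * y i)^2 * (∑ j, (y j)^2) := by
    funext y
    rw [euclid_inner, euclid_norm_sq]
    rfl
  have hfun2 : (fun y : Fin d → ℝ =>
      (‖(MeasurableEquiv.toLp 2 (Fin d → ℝ)) y‖^2)^3)
      = fun y : Fin d → ℝ => (∑ j, (y j)^2)^3 := by
    funext y
    rw [euclid_norm_sq]
    rfl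
  have int1 : Integrable (fun z : EuclideanSpace ℝ (Fin d) =>
      (inner ℝ g z : ℝ)^2*‖z‖^2) (stdGaussian d) := by
    rw [integrable_std_iff]
    rw [hfun1]
    exact integrable_J1fun (fun i => g i)
  have int2 : Integrable (fun z : EuclideanSpace ℝ (Fin d) =>
      (‖z‖^2)^3) (stdGaussian d) := by
    rw [integrable_std_iff]
    rw [hfun2]
    exact integrable_J2fun
  have hInt : Integrable (fun z : EuclideanSpace ℝ (Fin d) =>
      2*μ^2*((inner ℝ g z : ℝ)^2*‖z‖^2) + L^2*μ^4/2*(‖z‖^2)^3) (stdGaussian d) :=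
    (int1.const_mul _).add (int2.const_mul _)
  have hmono : (∫ z, (F (x + μ • z) - F x)^2 * ‖z‖^2 ∂(stdGaussian d))
      ≤ ∫ z, 2*μ^2*((inner ℝ g z : ℝ)^2*‖z‖^2) + L^2*μ^4/2*(‖z‖^2)^3 ∂(stdGaussian d) :=
    integral_mono_of_nonneg (Filter.Eventually.of_forall fun z => by positivity)
      hInt (Filter.Eventually.of_forall hpt)
  have e1 : ∫ z, (inner ℝ g z : ℝ)^2*‖z‖^2 ∂(stdGaussian d) = ((d:ℝ)+2) * ‖g‖^2 := by
    rw [integral_std_eq, hfun1, J1 (fun i => g i)]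
    congr 1
    exact (euclid_norm_sq d g).symm
  have e2 : ∫ z, (‖z‖^2)^3 ∂(stdGaussian d) = (d:ℝ)^3 + 6*(d:ℝ)^2 + 8*(d:ℝ) := by
    rw [integral_std_eq, hfun2, J2]
  have etot : ∫ z, 2*μ^2*((inner ℝ g z : ℝ)^2*‖z‖^2) + L^2*μ^4/2*(‖z‖^2)^3 ∂(stdGaussian d)
      = 2*μ^2*(((d:ℝ)+2) * ‖g‖^2) + L^2*μ^4/2*((d:ℝ)^3 + 6*(d:ℝ)^2 + 8*(d:ℝ)) := by
    rw [integral_add (int1.const_mul _) (int2.const_mul _), integral_const_mul,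
      integral_const_mul, e1, e2]
  calc (1/μ^2) * ∫ z, (F (x + μ • z) - F x)^2 * ‖z‖^2 ∂(stdGaussian d)
      ≤ (1/μ^2) * (2*μ^2*(((d:ℝ)+2) * ‖g‖^2) + L^2*μ^4/2*((d:ℝ)^3 + 6*(d:ℝ)^2 + 8*(d:ℝ))) := by
        rw [← etot]
        exact mul_le_mul_of_nonneg_left hmono (by positivity)
    _ = 2*((d:ℝ)+2)*‖g‖^2 + μ^2/2*L^2*((d:ℝ)^3 + 6*(d:ℝ)^2 + 8*(d:ℝ)) := by
        field_simp
    _ ≤ μ^2/2 * L^2 * ((d:ℝ) + 6)^3 + 2 * ((d:ℝ) + 4) * ‖g‖^2 := by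
        nlinarith [sq_nonneg ‖g‖, Nat.cast_nonneg (α := ℝ) d,
          mul_nonneg (mul_nonneg (sq_nonneg μ) (sq_nonneg L))
            (show (0:ℝ) ≤ 12*(d:ℝ)^2 + 100*(d:ℝ) + 216 by positivity),
          mul_nonneg (sq_nonneg μ) (sq_nonneg L)]
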